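/- arXiv:1105.5373 — 5 statements merged into one kernel-verified Lean document; each statement's English description precedes it below -/
import Mathlib

section
/- Let p be an odd prime, ℓ ≥ 1, q = p^ℓ, and d ≥ 3. Then there exists a set E ⊆ (ℤ/qℤ)^d with |E| = p^{(ℓ−1)d + ⌊(d−1)/2⌋} such that every element of the dot-product set Π(E) and every element of the distance set Δ(E) is divisible by p; in particular, Π(E) and Δ(E) contain no units of ℤ/qℤ. -/
open Finset

lemma aux_sum_ite {p : ℕ} (d m m' : ℕ) (x y : ZMod p) :
    ∑ i : Fin d, (if (i : ℕ) = m then x else 0) * (if (i : ℕ) = m' then y else 0)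
      = if m = m' ∧ m < d then x * y else 0 := by
  by_cases h : m = m' ∧ m < d
  · obtain ⟨rfl, hm⟩ := h
    rw [if_pos ⟨rfl, hm⟩, Fintype.sum_eq_single (⟨m, hm⟩ : Fin d)]
    · simp
    · intro i hi
      rw [if_neg, zero_mul]
      simpa [Fin.ext_iff] using hi
  · rw [if_neg h]
    refine Finset.sum_eq_zero fun i _ => ?_
    by_cases h1 : (i : ℕ) = m
    · by_cases h2 : (i : ℕ) = m'
      · have := i.isLt; exact absurd ⟨by omega, by omega⟩ h
      · rw [if_neg h2, mul_zero]
    · rw [if_neg h1, zero_mul]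

lemma aux_dot9 {p : ℕ} (d m1 m2 m3 n1 n2 n3 : ℕ) (x1 x2 y1 y2 : ZMod p) :
    ∑ i : Fin d, (((if (i : ℕ) = m1 then x1 else 0) + (if (i : ℕ) = m2 then x2 else 0)
        + (if (i : ℕ) = m3 then 1 else 0))
      * ((if (i : ℕ) = n1 then y1 else 0) + (if (i : ℕ) = n2 then y2 else 0)
        + (if (i : ℕ) = n3 then 1 else 0)))
    = (if m1 = n1 ∧ m1 < d then x1 * y1 else 0)
    + (if m1 = n2 ∧ m1 < d then x1 * y2 else 0)
    + (if m1 = n3 ∧ m1 < d then x1 * 1 else 0)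
    + (if m2 = n1 ∧ m2 < d then x2 * y1 else 0)
    + (if m2 = n2 ∧ m2 < d then x2 * y2 else 0)
    + (if m2 = n3 ∧ m2 < d then x2 * 1 else 0)
    + (if m3 = n1 ∧ m3 < d then 1 * y1 else 0)
    + (if m3 = n2 ∧ m3 < d then 1 * y2 else 0)
    + (if m3 = n3 ∧ m3 < d then 1 * 1 else 0) := by
  have key : ∀ i : Fin d,
      (((if (i : ℕ) = m1 then x1 else 0) + (if (i : ℕ) = m2 then x2 else 0)
        + (if (i : ℕ) = m3 then 1 else 0))
      * ((if (i : ℕ) = n1 then y1 else 0) + (if (i : ℕ) = n2 then y2 else 0)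
        + (if (i : ℕ) = n3 then 1 else 0)))
      = (if (i : ℕ) = m1 then x1 else 0) * (if (i : ℕ) = n1 then y1 else 0)
      + (if (i : ℕ) = m1 then x1 else 0) * (if (i : ℕ) = n2 then y2 else 0)
      + (if (i : ℕ) = m1 then x1 else 0) * (if (i : ℕ) = n3 then (1:ZMod p) else 0)
      + (if (i : ℕ) = m2 then x2 else 0) * (if (i : ℕ) = n1 then y1 else 0)
      + (if (i : ℕ) = m2 then x2 else 0) * (if (i : ℕ) = n2 then y2 else 0)
      + (if (i : ℕ) = m2 then x2 else 0) * (if (i : ℕ) = n3 then (1:ZMod p) else 0)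
      + (if (i : ℕ) = m3 then (1:ZMod p) else 0) * (if (i : ℕ) = n1 then y1 else 0)
      + (if (i : ℕ) = m3 then (1:ZMod p) else 0) * (if (i : ℕ) = n2 then y2 else 0)
      + (if (i : ℕ) = m3 then (1:ZMod p) else 0) * (if (i : ℕ) = n3 then (1:ZMod p) else 0) :=
    fun i => by ring
  rw [Finset.sum_congr rfl fun i _ => key i]
  simp only [Finset.sum_add_distrib, aux_sum_ite]

lemma aux_isotropic (p d k : ℕ) [Fact p.Prime] (hkd : 2 * k + 1 ≤ d) :
    ∃ (v : Fin k → Fin d → ZMod p) (piv : Fin k → Fin d),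
      (∀ j j', ∑ i, v j i * v j' i = 0) ∧
      (∀ j j', v j (piv j') = if j = j' then 1 else 0) := by
  obtain ⟨a, b, hab⟩ := ZMod.sq_add_sq p (-1)
  refine ⟨fun j i =>
      (if (i : ℕ) = 4 * ((j : ℕ) / 2) then (if (j : ℕ) % 2 = 0 then a else -b) else 0)
    + (if (i : ℕ) = 4 * ((j : ℕ) / 2) + 1 then (if (j : ℕ) % 2 = 0 then b else a) else 0)
    + (if (i : ℕ) = 4 * ((j : ℕ) / 2) + 2 + (j : ℕ) % 2 then 1 else 0),
    fun j => ⟨4 * ((j : ℕ) / 2) + 2 + (j : ℕ) % 2, by have := j.isLt; omega⟩, ?_, ?_⟩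
  · intro j j'
    have hj := j.isLt; have hj' := j'.isLt
    rw [aux_dot9]
    by_cases hss : (j : ℕ) / 2 = (j' : ℕ) / 2
    · have e2 : ¬(4*((j:ℕ)/2) = 4*((j':ℕ)/2)+1 ∧ 4*((j:ℕ)/2) < d) := by omega
      have e3 : ¬(4*((j:ℕ)/2) = 4*((j':ℕ)/2)+2+(j':ℕ)%2 ∧ 4*((j:ℕ)/2) < d) := by omega
      have e4 : ¬(4*((j:ℕ)/2)+1 = 4*((j':ℕ)/2) ∧ 4*((j:ℕ)/2)+1 < d) := by omega
      have e6 : ¬(4*((j:ℕ)/2)+1 = 4*((j':ℕ)/2)+2+(j':ℕ)%2 ∧ 4*((j:ℕ)/2)+1 < d) := by omega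
      have e7 : ¬(4*((j:ℕ)/2)+2+(j:ℕ)%2 = 4*((j':ℕ)/2) ∧ 4*((j:ℕ)/2)+2+(j:ℕ)%2 < d) := by omega
      have e8 : ¬(4*((j:ℕ)/2)+2+(j:ℕ)%2 = 4*((j':ℕ)/2)+1 ∧ 4*((j:ℕ)/2)+2+(j:ℕ)%2 < d) := by omega
      have e1 : (4*((j:ℕ)/2) = 4*((j':ℕ)/2) ∧ 4*((j:ℕ)/2) < d) := by omega
      have e5 : (4*((j:ℕ)/2)+1 = 4*((j':ℕ)/2)+1 ∧ 4*((j:ℕ)/2)+1 < d) := by omega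
      rw [if_pos e1, if_neg e2, if_neg e3, if_neg e4, if_pos e5, if_neg e6, if_neg e7,
        if_neg e8]
      by_cases hjj : (j : ℕ) = (j' : ℕ)
      · have e9 : (4*((j:ℕ)/2)+2+(j:ℕ)%2 = 4*((j':ℕ)/2)+2+(j':ℕ)%2
            ∧ 4*((j:ℕ)/2)+2+(j:ℕ)%2 < d) := by omega
        rw [if_pos e9]
        by_cases hpar : (j : ℕ) % 2 = 0
        · have hpar' : ((j' : ℕ) % 2 = 0) := by omega
          rw [if_pos hpar, if_pos hpar', if_pos hpar, if_pos hpar']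
          linear_combination hab
        · have hpar' : ¬((j' : ℕ) % 2 = 0) := by omega
          rw [if_neg hpar, if_neg hpar', if_neg hpar, if_neg hpar']
          linear_combination hab
      · have e9 : ¬(4*((j:ℕ)/2)+2+(j:ℕ)%2 = 4*((j':ℕ)/2)+2+(j':ℕ)%2
            ∧ 4*((j:ℕ)/2)+2+(j:ℕ)%2 < d) := by omega
        rw [if_neg e9]
        by_cases hpar : (j : ℕ) % 2 = 0
        · have hpar' : ¬((j' : ℕ) % 2 = 0) := by omega
          rw [if_pos hpar, if_neg hpar', if_pos hpar, if_neg hpar']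
          ring
        · have hpar' : ((j' : ℕ) % 2 = 0) := by omega
          rw [if_neg hpar, if_pos hpar', if_neg hpar, if_pos hpar']
          ring
    · have e1 : ¬(4*((j:ℕ)/2) = 4*((j':ℕ)/2) ∧ 4*((j:ℕ)/2) < d) := by omega
      have e2 : ¬(4*((j:ℕ)/2) = 4*((j':ℕ)/2)+1 ∧ 4*((j:ℕ)/2) < d) := by omega
      have e3 : ¬(4*((j:ℕ)/2) = 4*((j':ℕ)/2)+2+(j':ℕ)%2 ∧ 4*((j:ℕ)/2) < d) := by omega
      have e4 : ¬(4*((j:ℕ)/2)+1 = 4*((j':ℕ)/2) ∧ 4*((j:ℕ)/2)+1 < d) := by omega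
      have e5 : ¬(4*((j:ℕ)/2)+1 = 4*((j':ℕ)/2)+1 ∧ 4*((j:ℕ)/2)+1 < d) := by omega
      have e6 : ¬(4*((j:ℕ)/2)+1 = 4*((j':ℕ)/2)+2+(j':ℕ)%2 ∧ 4*((j:ℕ)/2)+1 < d) := by omega
      have e7 : ¬(4*((j:ℕ)/2)+2+(j:ℕ)%2 = 4*((j':ℕ)/2) ∧ 4*((j:ℕ)/2)+2+(j:ℕ)%2 < d) := by omega
      have e8 : ¬(4*((j:ℕ)/2)+2+(j:ℕ)%2 = 4*((j':ℕ)/2)+1 ∧ 4*((j:ℕ)/2)+2+(j:ℕ)%2 < d) := by omega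
      have e9 : ¬(4*((j:ℕ)/2)+2+(j:ℕ)%2 = 4*((j':ℕ)/2)+2+(j':ℕ)%2
          ∧ 4*((j:ℕ)/2)+2+(j:ℕ)%2 < d) := by omega
      rw [if_neg e1, if_neg e2, if_neg e3, if_neg e4, if_neg e5, if_neg e6, if_neg e7,
        if_neg e8, if_neg e9]
      norm_num
  · intro j j'
    have hj := j.isLt; have hj' := j'.isLt
    simp only [Fin.val_mk]
    by_cases hjj : j = j'
    · subst hjj
      have eA : ¬(4*((j:ℕ)/2)+2+(j:ℕ)%2 = 4*((j:ℕ)/2)) := by omega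
      have eB : ¬(4*((j:ℕ)/2)+2+(j:ℕ)%2 = 4*((j:ℕ)/2)+1) := by omega
      rw [if_neg eA, if_neg eB, if_pos rfl, if_pos rfl]
      norm_num
    · have hne : (j : ℕ) ≠ (j' : ℕ) := fun h => hjj (Fin.ext h)
      have eA : ¬(4*((j':ℕ)/2)+2+(j':ℕ)%2 = 4*((j:ℕ)/2)) := by omega
      have eB : ¬(4*((j':ℕ)/2)+2+(j':ℕ)%2 = 4*((j:ℕ)/2)+1) := by omega
      have eC : ¬(4*((j':ℕ)/2)+2+(j':ℕ)%2 = 4*((j:ℕ)/2)+2+(j:ℕ)%2) := by omega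
      rw [if_neg eA, if_neg eB, if_neg eC, if_neg hjj]
      norm_num

lemma aux_dvd {p n : ℕ} [NeZero n] (hdvd : p ∣ n) (z : ZMod n)
    (h : ZMod.castHom hdvd (ZMod p) z = 0) : (p : ZMod n) ∣ z := by
  rw [ZMod.castHom_apply, ← ZMod.natCast_val, ZMod.natCast_eq_zero_iff] at h
  obtain ⟨m, hm⟩ := h
  exact ⟨(m : ZMod n), by rw [← ZMod.natCast_zmod_val z, hm]; push_cast; ring⟩

lemma aux_dot {p d k : ℕ} (v : Fin k → Fin d → ZMod p)
    (hvv : ∀ j j', ∑ i, v j i * v j' i = 0)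
    (c c' : Fin k → ZMod p) :
    ∑ i, (∑ j, c j * v j i) * (∑ j, c' j * v j i) = 0 := by
  have key : ∀ i : Fin d, (∑ j, c j * v j i) * (∑ j, c' j * v j i)
      = ∑ j, ∑ j', (c j * c' j') * (v j i * v j' i) := by
    intro i
    rw [Finset.sum_mul]
    refine Finset.sum_congr rfl fun j _ => ?_
    rw [Finset.mul_sum]
    exact Finset.sum_congr rfl fun j' _ => by ring
  rw [Finset.sum_congr rfl fun i _ => key i, Finset.sum_comm]
  refine Finset.sum_eq_zero fun j _ => ?_
  rw [Finset.sum_comm]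
  refine Finset.sum_eq_zero fun j' _ => ?_
  rw [← Finset.mul_sum, hvv, mul_zero]

/-- The parametrization map for the sharpness example. -/
def auxPhi (p ℓ d k : ℕ) (v : Fin k → Fin d → ZMod p)
    (ct : (Fin k → ZMod p) × (Fin d → ZMod (p ^ (ℓ - 1)))) : Fin d → ZMod (p ^ ℓ) :=
  fun i => (∑ j, ((ct.1 j).val : ZMod (p ^ ℓ)) * ((v j i).val : ZMod (p ^ ℓ)))
    + (p : ZMod (p ^ ℓ)) * ((ct.2 i).val : ZMod (p ^ ℓ))

lemma aux_phi_cast (p ℓ d k : ℕ) [NeZero p] (hdvd : p ∣ p ^ ℓ) (v : Fin k → Fin d → ZMod p)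
    (ct : (Fin k → ZMod p) × (Fin d → ZMod (p ^ (ℓ - 1)))) (i : Fin d) :
    ZMod.castHom hdvd (ZMod p) (auxPhi p ℓ d k v ct i) = ∑ j, ct.1 j * v j i := by
  simp only [auxPhi, map_add, map_sum, map_mul, map_natCast, ZMod.natCast_zmod_val,
    ZMod.natCast_self, zero_mul, add_zero]

/-- **Sharpness example.** Let `p` be an odd prime, `ℓ ≥ 1`, `q = p^ℓ`, `d ≥ 3`.
There exists `E ⊆ (ℤ/qℤ)^d` with `|E| = p^{(ℓ−1)d + ⌊(d−1)/2⌋}` such that every element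
of the dot-product set `Π(E)` and of the distance set `Δ(E)` is divisible by `p`
(hence is a nonunit of `ℤ/qℤ`). -/
theorem sharpness_example (p ℓ d : ℕ) (hp : p.Prime) (hodd : Odd p)
    (hℓ : 1 ≤ ℓ) (hd : 3 ≤ d) :
    ∃ E : Finset (Fin d → ZMod (p ^ ℓ)),
      E.card = p ^ ((ℓ - 1) * d + (d - 1) / 2) ∧
      (∀ x ∈ E, ∀ y ∈ E, (p : ZMod (p ^ ℓ)) ∣ ∑ i, x i * y i) ∧
      (∀ x ∈ E, ∀ y ∈ E, (p : ZMod (p ^ ℓ)) ∣ ∑ i, (x i - y i) ^ 2) := by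
  haveI : Fact p.Prime := ⟨hp⟩
  have hp1 : 1 < p := hp.one_lt
  haveI : NeZero p := ⟨by omega⟩
  haveI : NeZero (p ^ ℓ) := ⟨pow_ne_zero _ (by omega)⟩
  haveI : NeZero (p ^ (ℓ - 1)) := ⟨pow_ne_zero _ (by omega)⟩
  have hdvd : p ∣ p ^ ℓ := dvd_pow_self p (by omega)
  obtain ⟨v, piv, hvv, hpiv⟩ := aux_isotropic p d ((d - 1) / 2) (by omega)
  have hinj : Function.Injective (auxPhi p ℓ d ((d - 1) / 2) v) := by
    rintro ⟨c, t⟩ ⟨c', t'⟩ h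
    have hs : ∀ (c0 : Fin ((d - 1) / 2) → ZMod p) (j0 : Fin ((d - 1) / 2)),
        ∑ j, c0 j * v j (piv j0) = c0 j0 := by
      intro c0 j0
      rw [Finset.sum_congr rfl fun j _ => by rw [hpiv j j0, mul_ite, mul_one, mul_zero]]
      simp
    have hc : c = c' := by
      funext j0
      have h1 := congrArg (fun x => ZMod.castHom hdvd (ZMod p) (x (piv j0))) h
      simp only [aux_phi_cast] at h1
      rwa [hs, hs] at h1
    subst hc
    have hb : ∀ s : ZMod (p ^ (ℓ - 1)), p * s.val < p ^ ℓ := by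
      intro s
      calc p * s.val < p * p ^ (ℓ - 1) := mul_lt_mul_of_pos_left (ZMod.val_lt s) (by omega)
        _ = p ^ ℓ := by rw [← pow_succ']; congr 1; omega
    have ht : t = t' := by
      funext i
      have h2 := congrFun h i
      simp only [auxPhi] at h2
      have h3 : ((p * (t i).val : ℕ) : ZMod (p ^ ℓ)) = ((p * (t' i).val : ℕ) : ZMod (p ^ ℓ)) := by
        push_cast
        exact add_left_cancel h2
      have h5 : p * (t i).val = p * (t' i).val := by
        have h6 := congrArg ZMod.val h3
        rwa [ZMod.val_natCast_of_lt (hb _), ZMod.val_natCast_of_lt (hb _)] at h6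
      exact ZMod.val_injective _ (Nat.eq_of_mul_eq_mul_left (by omega) h5)
    rw [ht]
  refine ⟨Finset.image (auxPhi p ℓ d ((d - 1) / 2) v) Finset.univ, ?_, ?_, ?_⟩
  · rw [Finset.card_image_of_injective _ hinj, Finset.card_univ, Fintype.card_prod,
      Fintype.card_fun, Fintype.card_fun, ZMod.card, ZMod.card, Fintype.card_fin,
      Fintype.card_fin, ← pow_mul, ← pow_add]
    congr 1
    ring
  · rintro x hx y hy
    obtain ⟨ct, -, rfl⟩ := Finset.mem_image.mp hx
    obtain ⟨ct', -, rfl⟩ := Finset.mem_image.mp hy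
    apply aux_dvd hdvd
    rw [map_sum]
    simp only [map_mul, aux_phi_cast]
    exact aux_dot v hvv ct.1 ct'.1
  · rintro x hx y hy
    obtain ⟨ct, -, rfl⟩ := Finset.mem_image.mp hx
    obtain ⟨ct', -, rfl⟩ := Finset.mem_image.mp hy
    apply aux_dvd hdvd
    rw [map_sum]
    have key : ∀ i, ZMod.castHom hdvd (ZMod p)
          ((auxPhi p ℓ d ((d - 1) / 2) v ct i - auxPhi p ℓ d ((d - 1) / 2) v ct' i) ^ 2)
        = (∑ j, (ct.1 j - ct'.1 j) * v j i) * (∑ j, (ct.1 j - ct'.1 j) * v j i) := by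
      intro i
      rw [sq, map_mul, map_sub, aux_phi_cast, aux_phi_cast, ← Finset.sum_sub_distrib]
      congr 1 <;> exact Finset.sum_congr rfl fun j _ => by ring
    rw [Finset.sum_congr rfl fun i _ => key i]
    exact aux_dot v hvv _ _
end

section
/- Let p be a prime with p ≡ 1 (mod 4), ℓ ≥ 1, q = p^ℓ, and let d ≥ 2 be even. Then there exists a set E ⊆ (ℤ/qℤ)^d with |E| = p^{(ℓ−1)d + d/2} = q^{(2ℓ−1)d/(2ℓ)} such that every element of Π(E) and every element of Δ(E) is divisible by p; in particular, Π(E) and Δ(E) contain no units of ℤ/qℤ. -/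
/-- **Sharpness example in even dimensions for `p ≡ 1 (mod 4)`.** Let `p ≡ 1 (mod 4)` be
prime, `ℓ ≥ 1`, `q = p^ℓ`, and `d ≥ 2` even. There exists `E ⊆ (ℤ/qℤ)^d` with
`|E| = p^{(ℓ−1)d + d/2}` such that every element of `Π(E)` and of `Δ(E)` is divisible
by `p` (hence is a nonunit of `ℤ/qℤ`). -/
theorem sharpness_example_even_dim (p ℓ d : ℕ) (hp : p.Prime) (hp4 : p % 4 = 1)
    (hℓ : 1 ≤ ℓ) (hd : 2 ≤ d) (hdeven : Even d) :
    ∃ E : Finset (Fin d → ZMod (p ^ ℓ)),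
      E.card = p ^ ((ℓ - 1) * d + d / 2) ∧
      (∀ x ∈ E, ∀ y ∈ E, (p : ZMod (p ^ ℓ)) ∣ ∑ i, x i * y i) ∧
      (∀ x ∈ E, ∀ y ∈ E, (p : ZMod (p ^ ℓ)) ∣ ∑ i, (x i - y i) ^ 2) := by
  haveI : Fact p.Prime := ⟨hp⟩
  haveI : NeZero (p ^ ℓ) := ⟨pow_ne_zero _ hp.ne_zero⟩
  haveI : NeZero (p ^ (ℓ - 1)) := ⟨pow_ne_zero _ hp.ne_zero⟩
  obtain ⟨m, hm⟩ := hdeven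
  have hm2 : d = m * 2 := by omega
  -- a square root of -1 mod p
  have hsq : IsSquare (-1 : ZMod p) := (ZMod.exists_sq_eq_neg_one_iff).2 (by omega)
  obtain ⟨i, hi⟩ := hsq
  set I : ZMod (p ^ ℓ) := ((i.val : ℕ) : ZMod (p ^ ℓ)) with hIdef
  have hℓ0 : ℓ ≠ 0 := by omega
  -- the reduction map
  set π : ZMod (p ^ ℓ) →+* ZMod p := ZMod.castHom (dvd_pow_self p hℓ0) (ZMod p) with hπdef
  have hdvd_of : ∀ z : ZMod (p ^ ℓ), π z = 0 → (p : ZMod (p ^ ℓ)) ∣ z := by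
    intro z hz
    have h1 : ((z.val : ℕ) : ZMod p) = 0 := by
      rwa [hπdef, ZMod.castHom_apply, ← ZMod.natCast_val] at hz
    obtain ⟨k, hk⟩ := (ZMod.natCast_eq_zero_iff _ _).1 h1
    refine ⟨(k : ZMod (p ^ ℓ)), ?_⟩
    have : ((z.val : ℕ) : ZMod (p ^ ℓ)) = z := ZMod.natCast_zmod_val z
    rw [← this, hk]
    push_cast
    ring
  have hI : (p : ZMod (p ^ ℓ)) ∣ 1 + I ^ 2 := by
    apply hdvd_of
    have hπI : π I = i := by
      rw [hIdef, map_natCast, ZMod.natCast_val, ZMod.cast_id]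
    rw [map_add, map_pow, map_one, hπI, pow_two, ← hi]
    ring
  obtain ⟨w, hw⟩ := hI
  -- the equivalence
  let eqv : Fin m × Fin 2 ≃ Fin d := finProdFinEquiv.trans (finCongr hm2.symm)
  -- the building map
  let g : ((Fin m → ZMod (p ^ ℓ)) × (Fin m → ZMod (p ^ (ℓ - 1)))) → Fin m × Fin 2 → ZMod (p ^ ℓ) :=
    fun ab jk => if jk.2 = 0 then ab.1 jk.1
      else I * ab.1 jk.1 + (p : ZMod (p ^ ℓ)) * (((ab.2 jk.1).val : ℕ) : ZMod (p ^ ℓ))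
  let F : ((Fin m → ZMod (p ^ ℓ)) × (Fin m → ZMod (p ^ (ℓ - 1)))) → (Fin d → ZMod (p ^ ℓ)) :=
    fun ab i => g ab (eqv.symm i)
  have hg0 : ∀ ab j, g ab (j, 0) = ab.1 j := fun ab j => if_pos rfl
  have hg1 : ∀ ab j, g ab (j, 1) = I * ab.1 j +
      (p : ZMod (p ^ ℓ)) * (((ab.2 j).val : ℕ) : ZMod (p ^ ℓ)) := fun ab j => if_neg one_ne_zero
  have hFinj : Function.Injective F := by
    intro ab ab' h
    have hgeq : ∀ jk, g ab jk = g ab' jk := by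
      intro jk
      have := congrFun h (eqv jk)
      simpa [F, Equiv.symm_apply_apply] using this
    have ha : ab.1 = ab'.1 := by
      funext j
      have := hgeq (j, 0)
      rwa [hg0, hg0] at this
    have hb : ab.2 = ab'.2 := by
      funext j
      have h1 := hgeq (j, 1)
      rw [hg1, hg1, ha] at h1
      have h2 : (p : ZMod (p ^ ℓ)) * (((ab.2 j).val : ℕ) : ZMod (p ^ ℓ)) =
          (p : ZMod (p ^ ℓ)) * (((ab'.2 j).val : ℕ) : ZMod (p ^ ℓ)) := by
        exact add_left_cancel h1
      have h3 : ((p * (ab.2 j).val : ℕ) : ZMod (p ^ ℓ)) =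
          ((p * (ab'.2 j).val : ℕ) : ZMod (p ^ ℓ)) := by push_cast; exact h2
      have hlt : ∀ c : ZMod (p ^ (ℓ - 1)), p * c.val < p ^ ℓ := by
        intro c
        calc p * c.val < p * p ^ (ℓ - 1) := by
              exact (Nat.mul_lt_mul_left hp.pos).2 (ZMod.val_lt c)
          _ = p ^ ℓ := by
              rw [← pow_succ']
              congr 1
              omega
      have h4 : p * (ab.2 j).val = p * (ab'.2 j).val := by
        have := congrArg ZMod.val h3
        rwa [ZMod.val_cast_of_lt (hlt _), ZMod.val_cast_of_lt (hlt _)] at this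
      have h5 : (ab.2 j).val = (ab'.2 j).val := Nat.eq_of_mul_eq_mul_left hp.pos h4
      exact ZMod.val_injective _ h5
    exact Prod.ext ha hb
  refine ⟨Finset.image F Finset.univ, ?_, ?_, ?_⟩
  · rw [Finset.card_image_of_injective _ hFinj, Finset.card_univ]
    rw [Fintype.card_prod, Fintype.card_fun, Fintype.card_fun, ZMod.card, ZMod.card,
      Fintype.card_fin, ← pow_mul, ← pow_mul, ← pow_add]
    congr 1
    obtain ⟨k, rfl⟩ : ∃ k, ℓ = k + 1 := ⟨ℓ - 1, by omega⟩
    have h6 : d / 2 = m := by omega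
    have h7 : k + 1 - 1 = k := by omega
    rw [h6, h7, hm2]
    ring
  · intro x hx y hy
    obtain ⟨ab, -, rfl⟩ := Finset.mem_image.1 hx
    obtain ⟨cd, -, rfl⟩ := Finset.mem_image.1 hy
    have : ∑ i, F ab i * F cd i = ∑ jk : Fin m × Fin 2, g ab jk * g cd jk := by
      rw [← Equiv.sum_comp eqv.symm (fun jk => g ab jk * g cd jk)]
    rw [this, Fintype.sum_prod_type]
    apply Finset.dvd_sum
    intro j _
    rw [Fin.sum_univ_two, hg0, hg0, hg1, hg1]
    refine ⟨w * (ab.1 j * cd.1 j) + I * ab.1 j * (((cd.2 j).val : ℕ) : ZMod (p ^ ℓ)) +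
      (((ab.2 j).val : ℕ) : ZMod (p ^ ℓ)) * (I * cd.1 j) +
      (p : ZMod (p ^ ℓ)) * ((((ab.2 j).val : ℕ) : ZMod (p ^ ℓ)) *
        (((cd.2 j).val : ℕ) : ZMod (p ^ ℓ))), ?_⟩
    linear_combination (ab.1 j * cd.1 j) * hw
  · intro x hx y hy
    obtain ⟨ab, -, rfl⟩ := Finset.mem_image.1 hx
    obtain ⟨cd, -, rfl⟩ := Finset.mem_image.1 hy
    have : ∑ i, (F ab i - F cd i) ^ 2 = ∑ jk : Fin m × Fin 2, (g ab jk - g cd jk) ^ 2 := by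
      rw [← Equiv.sum_comp eqv.symm (fun jk => (g ab jk - g cd jk) ^ 2)]
    rw [this, Fintype.sum_prod_type]
    apply Finset.dvd_sum
    intro j _
    rw [Fin.sum_univ_two, hg0, hg0, hg1, hg1]
    refine ⟨w * (ab.1 j - cd.1 j) ^ 2 +
      2 * I * (ab.1 j - cd.1 j) * ((((ab.2 j).val : ℕ) : ZMod (p ^ ℓ)) -
        (((cd.2 j).val : ℕ) : ZMod (p ^ ℓ))) +
      (p : ZMod (p ^ ℓ)) * ((((ab.2 j).val : ℕ) : ZMod (p ^ ℓ)) -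
        (((cd.2 j).val : ℕ) : ZMod (p ^ ℓ))) ^ 2, ?_⟩
    linear_combination ((ab.1 j - cd.1 j) ^ 2) * hw
end

section
/- Let p be an odd prime, ℓ ≥ 1, q = p^ℓ, d ≥ 2, and let j be a unit of ℤ/qℤ. Let S_j = {x ∈ (ℤ/qℤ)^d : x₁² + ⋯ + x_d² = j} be the sphere of radius j. Then | |S_j| − q^{d−1} | ≤ 2ℓ · q^{d−1} · p^{−(d−1)/2}. -/
/-!
Over a finite field `F` of odd order `q`, detecting `∑ xᵢ² = j` with a primitive additive
character `ψ` turns the count into `N q = q^d + g^d G`, where `g` is the quadratic Gauss sum,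
`|g|² = q`, and `G` is a Gauss sum of `χ^d` against `ψ(-j ·)`, so `|G|² ≤ q`; hence
`(N - q^(d-1))² ≤ q^(d-1)`.

Modulo `p^(m+1)` with `m ≥ 1`, the solutions lying over a fixed solution `y` mod `p^m` are
`z + p^m t` with `z` a lift of `y` and `t ∈ 𝔽_p^d`; since `(p^m t)² = 0`, the equation becomes the
linear condition `2 z · t = c` mod `p`, which is nondegenerate because `j` is a unit. So every
solution has exactly `p^(d-1)` lifts, the error term scales by the same factor, and
`(N - q^(d-1))² ≤ q^(2(d-1)) / p^(d-1)` for `q = p^ℓ`.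
-/

open Finset

def sumSqSphere (R : Type*) [CommRing R] [Fintype R] [DecidableEq R] (d : ℕ) (j : R) :
    Finset (Fin d → R) :=
  {x | ∑ i, x i ^ 2 = j}

@[simp]
lemma mem_sumSqSphere {R : Type*} [CommRing R] [Fintype R] [DecidableEq R] {d : ℕ} {j : R}
    {x : Fin d → R} : x ∈ sumSqSphere R d j ↔ ∑ i, x i ^ 2 = j := by
  simp [sumSqSphere]

lemma AddChar.map_sum_eq_prod {A M ι : Type*} [AddCommMonoid A] [CommMonoid M] (ψ : AddChar A M)
    (s : Finset ι) (f : ι → A) : ψ (∑ i ∈ s, f i) = ∏ i ∈ s, ψ (f i) :=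
  map_prod ψ.toMonoidHom (fun i ↦ Multiplicative.ofAdd (f i)) s

lemma AddMonoidHom.card_fiber_mul_card_of_surjective {G H : Type*} [AddGroup G] [Fintype G]
    [AddMonoid H] [Fintype H] [DecidableEq H] {f : G →+ H} (hf : Function.Surjective f) (h : H) :
    #{g | f g = h} * Fintype.card H = Fintype.card G := by
  calc #{g | f g = h} * Fintype.card H = ∑ h' : H, #{g | f g = h'} := by
        rw [sum_congr rfl fun h' _ ↦ card_fiber_eq_of_mem_range f (hf h') (hf h), sum_const,
          card_univ, smul_eq_mul, mul_comm]
    _ = Fintype.card G := (card_eq_sum_card_fiberwise fun _ _ ↦ mem_univ _).symm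

lemma card_dotProduct_eq_mul_card {K ι : Type*} [Field K] [Fintype K] [DecidableEq K] [Fintype ι]
    [DecidableEq ι] {w : ι → K} (hw : w ≠ 0) (c : K) :
    #{t : ι → K | w ⬝ᵥ t = c} * Fintype.card K = Fintype.card K ^ Fintype.card ι := by
  obtain ⟨i, hi⟩ := Function.ne_iff.mp hw
  have hsurj : Function.Surjective (AddMonoidHom.mk' (w ⬝ᵥ ·) (dotProduct_add w)) := fun c ↦
    ⟨Pi.single i (c / w i), by simp [dotProduct_single, mul_div_cancel₀ _ hi]⟩
  exact (AddMonoidHom.card_fiber_mul_card_of_surjective hsurj c).trans Fintype.card_fun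

lemma card_filter_mul_card_eq_sum_addChar {R R' X : Type*} [CommRing R] [Fintype R]
    [DecidableEq R] [CommRing R'] [IsDomain R'] [Fintype X] {ψ : AddChar R R'}
    (hψ : ψ.IsPrimitive) (f : X → R) (j : R) :
    (#{x | f x = j} : R') * Fintype.card R = ∑ a, ∑ x, ψ (a * (f x - j)) := by
  rw [sum_comm]
  simp_rw [AddChar.sum_mulShift _ hψ, sub_eq_zero, Nat.cast_ite, Nat.cast_zero]
  rw [← sum_filter, sum_const, nsmul_eq_mul]

lemma gaussSum_mulShift_of_isQuadratic {R R' : Type*} [CommRing R] [Fintype R] [CommRing R']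
    {χ : MulChar R R'} (hχ : χ.IsQuadratic) (ψ : AddChar R R') (a : Rˣ) :
    gaussSum χ (ψ.mulShift a) = χ a * gaussSum χ ψ := by
  rw [gaussSum_mulShift_eq, hχ.inv]

section FiniteField

variable {F : Type*} [Field F] [Fintype F]

lemma norm_gaussSum_sq {χ : MulChar F ℂ} (hχ : χ ≠ 1) {ψ : AddChar F ℂ} (hψ : ψ.IsPrimitive) :
    ‖gaussSum χ ψ‖ ^ 2 = Fintype.card F := by
  have h := gaussSum_mul_gaussSum_eq_card hχ hψ
  rw [← star_gaussSum_eq, Complex.star_def, Complex.mul_conj, Complex.normSq_eq_norm_sq] at h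
  exact_mod_cast h

lemma norm_gaussSum_sq_le (χ : MulChar F ℂ) {ψ : AddChar F ℂ} (hψ : ψ.IsPrimitive) :
    ‖gaussSum χ ψ‖ ^ 2 ≤ Fintype.card F := by
  rcases eq_or_ne χ 1 with rfl | hχ
  · have hψ1 : ψ ≠ 1 := by simpa using hψ one_ne_zero
    simpa [gaussSum_one_left hψ1] using Nat.succ_le_of_lt (Fintype.card_pos (α := F))
  · exact (norm_gaussSum_sq hχ hψ).le

variable (F) in
lemma exists_isPrimitive_addChar : ∃ ψ : AddChar F ℂ, ψ.IsPrimitive := by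
  obtain ⟨ψ, hψ⟩ := AddChar.exists_apply_ne_zero.mpr (one_ne_zero (α := F))
  exact ⟨ψ, AddChar.IsPrimitive.of_ne_one (AddChar.ne_one_iff.mpr ⟨1, hψ⟩)⟩

variable [DecidableEq F]

variable (F) in
abbrev complexQuadraticChar : MulChar F ℂ := (quadraticChar F).ringHomComp (Int.castRingHom ℂ)

lemma complexQuadraticChar_isQuadratic : (complexQuadraticChar F).IsQuadratic :=
  (quadraticChar_isQuadratic F).comp _

lemma sum_addChar_mul_sq (hF : ringChar F ≠ 2) {ψ : AddChar F ℂ} (hψ : ψ.IsPrimitive) {a : F}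
    (ha : a ≠ 0) :
    ∑ t, ψ (a * t ^ 2) = complexQuadraticChar F a * gaussSum (complexQuadraticChar F) ψ := by
  have hsqrts (s : F) : (#{t : F | t ^ 2 = s} : ℂ) = complexQuadraticChar F s + 1 := by
    have h := quadraticChar_card_sqrts hF s
    rw [Set.toFinset_ofPred] at h
    rw [MulChar.ringHomComp_apply, eq_intCast]
    exact_mod_cast h
  calc ∑ t, ψ (a * t ^ 2)
      = ∑ s, (complexQuadraticChar F s + 1) * ψ (a * s) := by
        rw [← sum_fiberwise univ (· ^ 2)]
        refine sum_congr rfl fun s _ ↦ ?_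
        rw [← hsqrts, ← nsmul_eq_mul, ← sum_const]
        exact sum_congr rfl fun t ht ↦ by rw [(mem_filter.mp ht).2]
    _ = gaussSum (complexQuadraticChar F) (ψ.mulShift (Units.mk0 a ha)) := by
        have h := AddChar.sum_mulShift a hψ
        simp only [if_neg ha] at h
        simp only [add_mul, one_mul, sum_add_distrib, gaussSum, Units.val_mk0,
          AddChar.mulShift_apply, add_eq_left]
        simpa [mul_comm] using h
    _ = _ := gaussSum_mulShift_of_isQuadratic complexQuadraticChar_isQuadratic _ _

lemma card_sumSqSphere_mul_card (hF : ringChar F ≠ 2) {ψ : AddChar F ℂ} (hψ : ψ.IsPrimitive)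
    {d : ℕ} (hd : d ≠ 0) (j : F) :
    (#(sumSqSphere F d j) : ℂ) * Fintype.card F = (Fintype.card F : ℂ) ^ d +
      gaussSum (complexQuadraticChar F) ψ ^ d *
        gaussSum (complexQuadraticChar F ^ d) (ψ.mulShift (-j)) := by
  set χ := complexQuadraticChar F
  have hrow (a : F) : ∑ x : Fin d → F, ψ (a * (∑ i, x i ^ 2 - j)) =
      ψ (-j * a) * (∑ t, ψ (a * t ^ 2)) ^ d := by
    rw [Fintype.sum_pow, mul_sum]
    refine sum_congr rfl fun x _ ↦ ?_
    rw [← AddChar.map_sum_eq_prod, ← AddChar.map_add_eq_mul, mul_sub, mul_sum]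
    ring_nf
  have hgauss : gaussSum (χ ^ d) (ψ.mulShift (-j)) = ∑ a ∈ {0}ᶜ, χ a ^ d * ψ (-j * a) := by
    rw [gaussSum, Fintype.sum_eq_add_sum_compl 0]
    simp [MulChar.pow_apply' _ hd, χ.map_zero, hd]
  rw [sumSqSphere, card_filter_mul_card_eq_sum_addChar hψ, Fintype.sum_eq_add_sum_compl 0, hrow,
    hgauss, mul_sum]
  congr 1
  · simp
  · refine sum_congr rfl fun a ha ↦ ?_
    rw [hrow, sum_addChar_mul_sq hF hψ (by simpa using ha)]
    ring

lemma sumSqSphere_card_sub_sq_le (hF : ringChar F ≠ 2) (d : ℕ) {j : F} (hj : j ≠ 0) :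
    ((#(sumSqSphere F (d + 1) j) : ℝ) - Fintype.card F ^ d) ^ 2 ≤ Fintype.card F ^ d := by
  obtain ⟨ψ, hψ⟩ := exists_isPrimitive_addChar F
  have hχ : complexQuadraticChar F ≠ 1 :=
    (MulChar.ringHomComp_ne_one_iff (RingHom.injective_int _)).mpr (quadraticChar_ne_one hF)
  have hnorm : ‖((#(sumSqSphere F (d + 1) j) * Fintype.card F - Fintype.card F ^ (d + 1) : ℝ) :
      ℂ)‖ ^ 2 ≤ Fintype.card F ^ (d + 2) := by
    push_cast
    rw [card_sumSqSphere_mul_card hF hψ d.add_one_ne_zero j, add_sub_cancel_left, norm_mul,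
      norm_pow, mul_pow, ← pow_mul, mul_comm _ 2, pow_mul, norm_gaussSum_sq hχ hψ,
      pow_succ _ (d + 1)]
    gcongr
    exact norm_gaussSum_sq_le _ (.of_ne_one (hψ (neg_ne_zero.mpr hj)))
  have hfactor :
      ((#(sumSqSphere F (d + 1) j) : ℝ) * Fintype.card F - Fintype.card F ^ (d + 1)) ^ 2 =
        ((#(sumSqSphere F (d + 1) j) : ℝ) - Fintype.card F ^ d) ^ 2 * (Fintype.card F : ℝ) ^ 2 := by
    ring
  rw [Complex.norm_real, Real.norm_eq_abs, sq_abs, hfactor, pow_add] at hnorm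
  exact le_of_mul_le_mul_right hnorm (by positivity)

end FiniteField

namespace ZMod

lemma natCast_pow_self (p k : ℕ) : (p : ZMod (p ^ k)) ^ k = 0 := by
  exact_mod_cast natCast_self (p ^ k)

variable (p n : ℕ)

/-- `t ↦ p ^ (n + 1) * t`, an isomorphism of `ZMod p` onto the kernel of the reduction
`ZMod (p ^ (n + 2)) → ZMod (p ^ (n + 1))`. -/
def powMulHom : ZMod p →+ ZMod (p ^ (n + 2)) :=
  ZMod.lift p
    ⟨(AddMonoidHom.mulLeft ((p : ZMod (p ^ (n + 2))) ^ (n + 1))).comp (Int.castAddHom _),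
      by simp [← pow_succ, natCast_pow_self]⟩

variable {p n}

lemma powMulHom_intCast (k : ℤ) : powMulHom p n k = (p : ZMod (p ^ (n + 2))) ^ (n + 1) * k :=
  ZMod.lift_coe _ _ k

lemma powMulHom_injective [Fact p.Prime] : Function.Injective (powMulHom p n) := by
  refine (injective_iff_map_eq_zero _).mpr fun t ht ↦ ?_
  obtain ⟨k, rfl⟩ := ZMod.intCast_surjective t
  rw [powMulHom_intCast, ← Int.cast_natCast, ← Int.cast_pow, ← Int.cast_mul,
    intCast_zmod_eq_zero_iff_dvd, Nat.cast_pow, pow_succ _ (n + 1)] at ht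
  rw [intCast_zmod_eq_zero_iff_dvd]
  exact Int.dvd_of_mul_dvd_mul_left (pow_ne_zero _ (mod_cast (Fact.out : p.Prime).ne_zero)) ht

lemma powMulHom_mul_powMulHom (s t : ZMod p) : powMulHom p n s * powMulHom p n t = 0 := by
  obtain ⟨k, rfl⟩ := ZMod.intCast_surjective s
  obtain ⟨m, rfl⟩ := ZMod.intCast_surjective t
  rw [powMulHom_intCast, powMulHom_intCast]
  calc _ = (p : ZMod (p ^ (n + 2))) ^ (n + 2) * (p ^ n * k * m) := by ring
    _ = 0 := by rw [natCast_pow_self, zero_mul]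

lemma mul_powMulHom (z : ZMod (p ^ (n + 2))) (t : ZMod p) :
    z * powMulHom p n t =
      powMulHom p n (castHom (dvd_pow_self p (n + 1).succ_ne_zero) _ z * t) := by
  obtain ⟨k, rfl⟩ := ZMod.intCast_surjective z
  obtain ⟨m, rfl⟩ := ZMod.intCast_surjective t
  rw [map_intCast (castHom (dvd_pow_self p (n + 1).succ_ne_zero) (ZMod p)), ← Int.cast_mul,
    powMulHom_intCast, powMulHom_intCast]
  push_cast
  ring

lemma castHom_eq_zero_iff_mem_range (x : ZMod (p ^ (n + 2))) :
    castHom (pow_dvd_pow p (n + 1).le_succ) (ZMod (p ^ (n + 1))) x = 0 ↔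
      x ∈ Set.range (powMulHom p n) := by
  obtain ⟨k, rfl⟩ := ZMod.intCast_surjective x
  rw [map_intCast, intCast_zmod_eq_zero_iff_dvd]
  constructor
  · rintro ⟨m, rfl⟩
    exact ⟨m, by rw [powMulHom_intCast]; push_cast; rfl⟩
  · rintro ⟨t, ht⟩
    obtain ⟨m, rfl⟩ := ZMod.intCast_surjective t
    rw [powMulHom_intCast, ← Int.cast_natCast, ← Int.cast_pow, ← Int.cast_mul,
      intCast_eq_intCast_iff_dvd_sub] at ht
    have h := (pow_dvd_pow (p : ℤ) (n + 1).le_succ).trans (by exact_mod_cast ht)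
    exact_mod_cast (dvd_sub_left (dvd_mul_right _ m)).mp h

lemma castHom_powMulHom (t : ZMod p) :
    castHom (dvd_pow_self p (n + 1).succ_ne_zero) (ZMod p) (powMulHom p n t) = 0 := by
  obtain ⟨k, rfl⟩ := ZMod.intCast_surjective t
  rw [powMulHom_intCast, map_mul, map_pow, map_natCast, natCast_self, zero_pow n.succ_ne_zero,
    zero_mul]

end ZMod

section Hensel

open ZMod

variable {p n d : ℕ}

lemma sum_sq_add_powMulHom (z : Fin d → ZMod (p ^ (n + 2))) (t : Fin d → ZMod p) :
    ∑ i, (z i + powMulHom p n (t i)) ^ 2 = ∑ i, z i ^ 2 +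
      powMulHom p n
        ((fun i ↦ castHom (dvd_pow_self p (n + 1).succ_ne_zero) _ (2 * z i)) ⬝ᵥ t) := by
  have hsq (i : Fin d) : (z i + powMulHom p n (t i)) ^ 2 =
      z i ^ 2 + powMulHom p n (castHom (dvd_pow_self p (n + 1).succ_ne_zero) _ (2 * z i) * t i) :=
    calc _ = z i ^ 2 + 2 * z i * powMulHom p n (t i) +
          powMulHom p n (t i) * powMulHom p n (t i) := by ring
      _ = _ := by rw [powMulHom_mul_powMulHom, add_zero, mul_powMulHom]
  simp only [hsq, sum_add_distrib, dotProduct, map_sum]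

variable [Fact p.Prime]

lemma card_sumSqSphere_fiber_castHom (z : Fin d → ZMod (p ^ (n + 2))) (j : ZMod (p ^ (n + 2))) :
    #{x ∈ sumSqSphere _ d j |
        castHom (pow_dvd_pow p (n + 1).le_succ) (ZMod (p ^ (n + 1))) ∘ x =
          castHom (pow_dvd_pow p (n + 1).le_succ) (ZMod (p ^ (n + 1))) ∘ z} =
      #{t : Fin d → ZMod p | powMulHom p n
        ((fun i ↦ castHom (dvd_pow_self p (n + 1).succ_ne_zero) _ (2 * z i)) ⬝ᵥ t) =
          j - ∑ i, z i ^ 2} := by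
  set π := castHom (pow_dvd_pow p (n + 1).le_succ) (ZMod (p ^ (n + 1)))
  refine (card_nbij (fun t ↦ z + powMulHom p n ∘ t) (fun t ht ↦ ?_) (fun t _ t' _ h ↦ ?_)
    (fun x hx ↦ ?_)).symm
  · simp only [coe_filter, mem_univ, true_and, Set.mem_ofPred_eq] at ht
    simp only [coe_filter, mem_sumSqSphere, Set.mem_ofPred_eq, Pi.add_apply, Function.comp_apply]
    refine ⟨by rw [sum_sq_add_powMulHom, ht, add_sub_cancel], funext fun i ↦ ?_⟩
    change π (z i + powMulHom p n (t i)) = π (z i)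
    rw [map_add, (castHom_eq_zero_iff_mem_range _).mpr ⟨t i, rfl⟩, add_zero]
  · funext i
    exact powMulHom_injective (add_left_cancel (congrFun h i))
  · simp only [coe_filter, mem_sumSqSphere, Set.mem_ofPred_eq] at hx
    obtain ⟨hxj, hxz⟩ := hx
    have hker (i : Fin d) : x i - z i ∈ Set.range (powMulHom p n) :=
      (castHom_eq_zero_iff_mem_range _).mp (by rw [map_sub, sub_eq_zero]; exact congrFun hxz i)
    choose t ht using hker
    have hzt : z + powMulHom p n ∘ t = x := funext fun i ↦ by simp [ht]
    refine ⟨t, ?_, hzt⟩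
    simp only [coe_filter, mem_univ, true_and, Set.mem_ofPred_eq]
    rw [← hxj, ← hzt]
    simp only [Pi.add_apply, Function.comp_apply, sum_sq_add_powMulHom, add_sub_cancel_left]

lemma castHom_two_mul_ne_zero (hp : p ≠ 2) {j : ZMod (p ^ (n + 2))} (hj : IsUnit j)
    {z : Fin d → ZMod (p ^ (n + 2))} {c : ZMod p} (hc : powMulHom p n c = j - ∑ i, z i ^ 2) :
    (fun i ↦ castHom (dvd_pow_self p (n + 1).succ_ne_zero) (ZMod p) (2 * z i)) ≠ 0 := by
  set ρ := castHom (dvd_pow_self p (n + 1).succ_ne_zero) (ZMod p)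
  intro hw
  have h2 : (2 : ZMod p) ≠ 0 := Ring.two_ne_zero (by rwa [ZMod.ringChar_zmod_n])
  have hz (i : Fin d) : ρ (z i) = 0 := by
    have h := congrFun hw i
    rw [Pi.zero_apply, map_mul, map_ofNat, mul_eq_zero] at h
    exact h.resolve_left h2
  apply (hj.map ρ).ne_zero
  rw [← sub_add_cancel j (∑ i, z i ^ 2), ← hc, map_add, castHom_powMulHom, map_sum]
  simp [hz]

theorem card_sumSqSphere_succ (hp : p ≠ 2) {j : ZMod (p ^ (n + 2))} (hj : IsUnit j) :
    #(sumSqSphere _ (d + 1) j) =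
      p ^ d * #(sumSqSphere _ (d + 1)
        (castHom (pow_dvd_pow p (n + 1).le_succ) (ZMod (p ^ (n + 1))) j)) := by
  set π := castHom (pow_dvd_pow p (n + 1).le_succ) (ZMod (p ^ (n + 1)))
  have hfiber (y) (hy : y ∈ sumSqSphere _ (d + 1) (π j)) :
      #{x ∈ sumSqSphere _ (d + 1) j | π ∘ x = y} = p ^ d := by
    obtain ⟨z, rfl⟩ := (ZMod.ringHom_surjective π).comp_left y
    obtain ⟨c, hc⟩ := (castHom_eq_zero_iff_mem_range (j - ∑ i, z i ^ 2)).mp (by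
      rw [mem_sumSqSphere] at hy
      rw [map_sub, map_sum, sub_eq_zero, ← hy]
      simp only [Function.comp_apply, map_pow]
      rfl)
    rw [card_sumSqSphere_fiber_castHom, ← hc]
    simp_rw [powMulHom_injective.eq_iff]
    apply Nat.eq_of_mul_eq_mul_right (Fact.out : p.Prime).pos
    have h := card_dotProduct_eq_mul_card (castHom_two_mul_ne_zero hp hj hc) c
    rwa [ZMod.card, Fintype.card_fin, pow_succ p d] at h
  rw [card_eq_sum_card_fiberwise (f := (π ∘ ·)) (t := sumSqSphere _ (d + 1) (π j)) ?_,
    sum_congr rfl hfiber, sum_const, smul_eq_mul, mul_comm]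
  intro x hx
  rw [mem_coe, mem_sumSqSphere] at hx ⊢
  rw [← hx, map_sum]
  simp only [Function.comp_apply, map_pow]

end Hensel

theorem sumSqSphere_zmod_pow_card_sub_sq_le {p : ℕ} [Fact p.Prime] (hp : p ≠ 2) (d : ℕ) :
    ∀ (n : ℕ) {j : ZMod (p ^ (n + 1))}, IsUnit j →
      ((#(sumSqSphere _ (d + 1) j) : ℝ) - (p : ℝ) ^ ((n + 1) * d)) ^ 2 ≤
        (p : ℝ) ^ ((2 * n + 1) * d)
  | 0, j, hj => by
    have : Fact (p ^ (0 + 1)).Prime := ⟨by rw [zero_add, pow_one]; exact Fact.out⟩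
    have hF : ringChar (ZMod (p ^ (0 + 1))) ≠ 2 := by
      rwa [ZMod.ringChar_zmod_n, zero_add, pow_one]
    simpa [ZMod.card] using sumSqSphere_card_sub_sq_le hF d hj.ne_zero
  | n + 1, j, hj => by
    set π := ZMod.castHom (pow_dvd_pow p (n + 1).le_succ) (ZMod (p ^ (n + 1)))
    have ih := sumSqSphere_zmod_pow_card_sub_sq_le hp d n (hj.map π)
    rw [card_sumSqSphere_succ hp hj, Nat.cast_mul, Nat.cast_pow]
    calc ((p : ℝ) ^ d * #(sumSqSphere _ (d + 1) (π j)) - (p : ℝ) ^ ((n + 1 + 1) * d)) ^ 2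
        = ((p : ℝ) ^ d) ^ 2 *
            ((#(sumSqSphere _ (d + 1) (π j)) : ℝ) - (p : ℝ) ^ ((n + 1) * d)) ^ 2 := by ring
      _ ≤ ((p : ℝ) ^ d) ^ 2 * (p : ℝ) ^ ((2 * n + 1) * d) := by gcongr
      _ = (p : ℝ) ^ ((2 * (n + 1) + 1) * d) := by ring

lemma sq_pow_mul_rpow_neg_half {x : ℝ} (hx : 0 < x) (n e : ℕ) :
    (x ^ ((n + 1) * e) * x ^ (-(e / 2 : ℝ))) ^ 2 = x ^ ((2 * n + 1) * e) := by
  have h : (x ^ (-(e / 2 : ℝ))) ^ 2 * x ^ e = 1 := by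
    rw [← Real.rpow_mul_natCast hx.le, ← Real.rpow_natCast, ← Real.rpow_add hx]
    norm_num
  calc _ = x ^ ((2 * n + 1) * e) * ((x ^ (-(e / 2 : ℝ))) ^ 2 * x ^ e) := by ring
    _ = _ := by rw [h, mul_one]

/-- **Cardinality of spheres in `(ℤ/p^ℓℤ)^d`.** Let `p` be an odd prime, `ℓ ≥ 1`,
`q = p^ℓ`, `d ≥ 2`, and let `j` be a unit of `ℤ/qℤ`. Then the sphere
`S_j = {x : ‖x‖ = j}` satisfies `||S_j| − q^{d−1}| ≤ 2ℓ·q^{d−1}·p^{−(d−1)/2}`. -/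
theorem sphere_card_estimate (p ℓ d : ℕ) [Fact p.Prime] (hodd : Odd p)
    (hℓ : 1 ≤ ℓ) (hd : 2 ≤ d) (j : ZMod (p ^ ℓ)) (hj : IsUnit j) :
    |(((Finset.univ.filter fun x : Fin d → ZMod (p ^ ℓ) => ∑ i, x i ^ 2 = j).card : ℝ)) -
        ((p : ℝ) ^ ℓ) ^ (d - 1)| ≤
      2 * ℓ * ((p : ℝ) ^ ℓ) ^ (d - 1) * (p : ℝ) ^ (-(((d : ℝ) - 1) / 2)) := by
  have hp : p ≠ 2 := by rintro rfl; exact absurd hodd (by decide)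
  obtain ⟨n, rfl⟩ : ∃ n, ℓ = n + 1 := ⟨ℓ - 1, by omega⟩
  obtain ⟨e, rfl⟩ : ∃ e, d = e + 1 := ⟨d - 1, by omega⟩
  have hp0 : (0 : ℝ) < p := by exact_mod_cast (Fact.out : p.Prime).pos
  set X := (p : ℝ) ^ ((n + 1) * e) * (p : ℝ) ^ (-(e / 2 : ℝ)) with hXdef
  have hX : X ^ 2 = (p : ℝ) ^ ((2 * n + 1) * e) := sq_pow_mul_rpow_neg_half hp0 n e
  have hdiff : |(#(sumSqSphere _ (e + 1) j) : ℝ) - (p : ℝ) ^ ((n + 1) * e)| ≤ X :=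
    abs_le_of_sq_le_sq (hX ▸ sumSqSphere_zmod_pow_card_sub_sq_le hp e n hj) (by positivity)
  calc _ ≤ X := by rwa [Nat.add_sub_cancel, ← pow_mul]
    _ ≤ 2 * (n + 1 : ℕ) * X := le_mul_of_one_le_left (by positivity) (by push_cast; linarith)
    _ = _ := by rw [hXdef, Nat.add_sub_cancel, ← pow_mul]; push_cast; ring_nf
end

section
/- Let p be an odd prime, m ≥ 1, and let b be a unit of ℤ/p^mℤ. Then | Σ_{x ∈ ℤ/p^mℤ} η(x) · exp(2πi b x / p^m) | ≤ p^{m/2}, where η(x) denotes the Legendre symbol (x mod p / p) (so η(x) = 0 when p divides x). -/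
/-!
For `m = 1` the sum is the Gauss sum of the quadratic character against a primitive additive
character, whose absolute value is `√p` because `g(χ, ψ) · conj g(χ, ψ) = g(χ, ψ) g(χ⁻¹, ψ⁻¹) = p`.
For `m ≥ 2` the summand `η(x)` has period `p^(m-1)` while `x ↦ e(bx / p^m)` does not, so
translating `x` by `p^(m-1)` multiplies the sum by `e(b / p) ≠ 1` and the sum vanishes.
-/

/-- The canonical additive character of `ℤ/qℤ`: `c ↦ exp(2πi·c̃/q)` where `c̃` is the
canonical integer representative of `c`. -/
noncomputable def eZMod (q : ℕ) (c : ZMod q) : ℂ :=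
  Complex.exp (2 * Real.pi * Complex.I * c.val / q)

lemma eZMod_eq_stdAddChar {q : ℕ} [NeZero q] (c : ZMod q) :
    eZMod q c = ZMod.stdAddChar c := by
  rw [ZMod.stdAddChar_apply, ZMod.toCircle_apply]; rfl

lemma legendreSym_val_eq_quadraticChar_cast (p : ℕ) [Fact p.Prime] {n : ℕ} [NeZero n]
    (x : ZMod n) : legendreSym p x.val = quadraticChar (ZMod p) (x.cast : ZMod p) := by
  rw [legendreSym, ZMod.cast_eq_val, Int.cast_natCast]

lemma AddChar.sum_mul_eq_zero_of_add_right_eq {G R : Type*} [AddGroup G] [Fintype G]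
    [CommRing R] [IsDomain R] {f : G → R} {ψ : AddChar G R} {t : G}
    (hf : ∀ x, f (x + t) = f x) (ht : ψ t ≠ 1) : ∑ x, f x * ψ x = 0 := by
  have hshift : ∑ x, f x * ψ x = ψ t * ∑ x, f x * ψ x := by
    rw [Finset.mul_sum, ← Equiv.sum_comp (Equiv.addRight t)]
    refine Finset.sum_congr rfl fun x _ => ?_
    rw [Equiv.coe_addRight, hf, AddChar.map_add_eq_mul]
    ring
  have : (ψ t - 1) * ∑ x, f x * ψ x = 0 := by rw [sub_mul, ← hshift]; ring
  exact (mul_eq_zero.mp this).resolve_left (sub_ne_zero.mpr ht)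

lemma norm_gaussSum_eq_sqrt_card {F : Type*} [Field F] [Fintype F] {χ : MulChar F ℂ}
    (hχ : χ ≠ 1) {ψ : AddChar F ℂ} (hψ : ψ.IsPrimitive) :
    ‖gaussSum χ ψ‖ = √(Fintype.card F) := by
  have hsq : (‖gaussSum χ ψ‖ : ℂ) ^ 2 = Fintype.card F := by
    rw [← Complex.mul_conj', ← gaussSum_mul_gaussSum_eq_card hχ hψ, ← star_gaussSum_eq]
    rfl
  rw [← Real.sqrt_sq (norm_nonneg _)]
  exact congrArg Real.sqrt (by exact_mod_cast hsq)

/-- Stated for any `n = p` so that it applies to `ZMod (p ^ 1)`, whose `Fintype` instance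
prevents rewriting `p ^ 1` to `p`. -/
lemma norm_sum_legendreSym_mul_eZMod_prime (p : ℕ) [Fact p.Prime] (hodd : Odd p)
    {n : ℕ} [NeZero n] (hn : n = p) {b : ZMod n} (hb : IsUnit b) :
    ‖∑ x : ZMod n, (legendreSym p x.val : ℂ) * eZMod n (b * x)‖ = √p := by
  subst n
  set χ : MulChar (ZMod p) ℂ := (quadraticChar (ZMod p)).ringHomComp (Int.castRingHom ℂ)
  have hχ : χ ≠ 1 := (MulChar.ringHomComp_ne_one_iff (RingHom.injective_int _)).mpr
    (quadraticChar_ne_one (by rw [ZMod.ringChar_zmod_n]; exact hodd.ne_two_of_dvd_nat dvd_rfl))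
  have hψ : (ZMod.stdAddChar.mulShift b).IsPrimitive :=
    AddChar.IsPrimitive.of_ne_one (ZMod.isPrimitive_stdAddChar p hb.ne_zero)
  have hsum : ∑ x : ZMod p, (legendreSym p x.val : ℂ) * eZMod p (b * x)
      = gaussSum χ (ZMod.stdAddChar.mulShift b) := by
    refine Finset.sum_congr rfl fun x _ => ?_
    rw [legendreSym_val_eq_quadraticChar_cast, ZMod.cast_id, eZMod_eq_stdAddChar]
    rfl
  rw [hsum, norm_gaussSum_eq_sqrt_card hχ hψ, ZMod.card]

lemma sum_legendreSym_mul_eZMod_eq_zero (p : ℕ) [Fact p.Prime] {m : ℕ} (hm : 2 ≤ m)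
    {b : ZMod (p ^ m)} (hb : IsUnit b) :
    ∑ x : ZMod (p ^ m), (legendreSym p x.val : ℂ) * eZMod (p ^ m) (b * x) = 0 := by
  have hp := (Fact.out : p.Prime)
  have hdvd : p ∣ p ^ m := dvd_pow_self p (by omega)
  set t : ZMod (p ^ m) := ((p ^ (m - 1) : ℕ) : ZMod (p ^ m)) with ht
  have hperiodic (x : ZMod (p ^ m)) :
      (legendreSym p (x + t).val : ℂ) = legendreSym p x.val := by
    rw [legendreSym_val_eq_quadraticChar_cast, legendreSym_val_eq_quadraticChar_cast,
      ZMod.cast_add hdvd, ht, ZMod.cast_natCast hdvd, Nat.cast_pow, ZMod.natCast_self,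
      zero_pow (by omega), add_zero]
  have hbt : b * t ≠ 0 := by
    rw [Ne, hb.mul_right_eq_zero, ht, ZMod.natCast_eq_zero_iff,
      Nat.pow_dvd_pow_iff_le_right hp.one_lt]
    omega
  have hψt : ZMod.stdAddChar.mulShift b t ≠ 1 := by
    rw [AddChar.mulShift_apply, ← AddChar.map_zero_eq_one (ZMod.stdAddChar (N := p ^ m))]
    exact ZMod.injective_stdAddChar.ne hbt
  simp only [eZMod_eq_stdAddChar, ← AddChar.mulShift_apply]
  exact AddChar.sum_mul_eq_zero_of_add_right_eq hperiodic hψt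

/-- **Generalized Gauss sum bound.** Let `p` be an odd prime, `m ≥ 1`, and `b` a unit
of `ℤ/p^mℤ`. Then `|Σ_{x ∈ ℤ/p^mℤ} η(x)·exp(2πi·bx/p^m)| ≤ p^{m/2}`, where `η(x)` is
the Legendre symbol of `x mod p`. -/
theorem twisted_gauss_sum_bound (p m : ℕ) [Fact p.Prime] (hodd : Odd p) (hm : 1 ≤ m)
    (b : ZMod (p ^ m)) (hb : IsUnit b) :
    ‖(∑ x : ZMod (p ^ m),
        (legendreSym p (x.val) : ℂ) * eZMod (p ^ m) (b * x))‖ ≤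
      (p : ℝ) ^ ((m : ℝ) / 2) := by
  obtain rfl | hm2 : m = 1 ∨ 2 ≤ m := by omega
  · rw [norm_sum_legendreSym_mul_eZMod_prime p hodd (pow_one p) hb, Real.sqrt_eq_rpow,
      Nat.cast_one, one_div]
  · rw [sum_legendreSym_mul_eZMod_eq_zero p hm2 hb, norm_zero]
    positivity
end

section
/- Let p be an odd prime, β ≥ 1, let a ∈ ℤ/p^βℤ with p dividing a, and let b be a unit of ℤ/p^βℤ. Then the map h(x) = a·x^{−1} + b·x is a bijection from the group of units (ℤ/p^βℤ)^× to itself; moreover its inverse g satisfies g(y) ≡ y·b^{−1} (mod p) for every unit y. -/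
/-- **A bijection of the unit group.** Let `p` be an odd prime, `β ≥ 1`, `a ∈ ℤ/p^βℤ`
with `p ∣ a`, and `b` a unit of `ℤ/p^βℤ`. Then `h(x) = a·x⁻¹ + b·x` is a bijection of
the set of units of `ZMod p^β` onto itself, and its inverse `g` satisfies
`g(y) ≡ y·b⁻¹ (mod p)` for every unit `y` (equivalently, `h(x) = y` implies
`x ≡ y·b⁻¹ (mod p)`). -/
theorem kloosterman_map_bijective (p β : ℕ) (hp : p.Prime) (hodd : Odd p) (hβ : 1 ≤ β)
    (a b : ZMod (p ^ β)) (ha : (p : ZMod (p ^ β)) ∣ a) (hb : IsUnit b) :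
    Set.BijOn (fun x : ZMod (p ^ β) => a * x⁻¹ + b * x)
        {x : ZMod (p ^ β) | IsUnit x} {y : ZMod (p ^ β) | IsUnit y} ∧
      ∀ x y : ZMod (p ^ β), IsUnit x → IsUnit y → a * x⁻¹ + b * x = y →
        ZMod.castHom (dvd_pow_self p (by omega : β ≠ 0)) (ZMod p) x =
          ZMod.castHom (dvd_pow_self p (by omega : β ≠ 0)) (ZMod p) (y * b⁻¹) := by
  have hβ0 : β ≠ 0 := by omega
  haveI : Fact p.Prime := ⟨hp⟩
  haveI : NeZero (p ^ β) := ⟨pow_ne_zero β hp.ne_zero⟩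
  set f : ZMod (p ^ β) →+* ZMod p := ZMod.castHom (dvd_pow_self p hβ0) (ZMod p) with hfdef
  have hfa : f a = 0 := by
    obtain ⟨c, rfl⟩ := ha
    simp [map_mul]
  -- units are exactly the elements with nonzero reduction mod p
  have hunit : ∀ x : ZMod (p ^ β), IsUnit x ↔ f x ≠ 0 := by
    intro x
    have hx : f x = ((x.val : ℕ) : ZMod p) := by
      simp [hfdef, ZMod.castHom_apply, ZMod.natCast_val]
    constructor
    · intro h h0
      have := h.map f
      rw [h0] at this
      exact not_isUnit_zero this
    · intro h
      rw [hx, Ne, ZMod.natCast_eq_zero_iff] at h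
      have : IsUnit ((x.val : ℕ) : ZMod (p ^ β)) := by
        rw [ZMod.isUnit_iff_coprime]
        exact Nat.Coprime.pow_right β (Nat.coprime_comm.mp ((hp.coprime_iff_not_dvd).mpr h))
      rwa [ZMod.natCast_zmod_val] at this
  have hfb : f b ≠ 0 := (hunit b).mp hb
  -- f of the map
  have hkey : ∀ x : ZMod (p ^ β), IsUnit x → f (a * x⁻¹ + b * x) = f b * f x := by
    intro x hx
    simp [map_add, map_mul, hfa]
  -- maps to
  have hmaps : Set.MapsTo (fun x : ZMod (p ^ β) => a * x⁻¹ + b * x)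
      {x : ZMod (p ^ β) | IsUnit x} {y : ZMod (p ^ β) | IsUnit y} := by
    intro x hx
    simp only [Set.mem_setOf_eq] at hx ⊢
    rw [hunit, hkey x hx]
    exact mul_ne_zero hfb ((hunit x).mp hx)
  -- injective
  have hinj : Set.InjOn (fun x : ZMod (p ^ β) => a * x⁻¹ + b * x)
      {x : ZMod (p ^ β) | IsUnit x} := by
    intro x1 hx1 x2 hx2 heq
    simp only [Set.mem_setOf_eq] at hx1 hx2
    have h1 := ZMod.mul_inv_of_unit x1 hx1
    have h2 := ZMod.mul_inv_of_unit x2 hx2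
    have e : (x1 - x2) * (b * (x1 * x2) - a) = 0 := by
      simp only at heq
      linear_combination x1 * x2 * heq - a * x2 * h1 + a * x1 * h2
    have hu : IsUnit (b * (x1 * x2) - a) := by
      rw [hunit]
      have : f (b * (x1 * x2) - a) = f b * (f x1 * f x2) := by
        simp [map_sub, map_mul, hfa]
      rw [this]
      exact mul_ne_zero hfb (mul_ne_zero ((hunit x1).mp hx1) ((hunit x2).mp hx2))
    have := (hu.mul_left_eq_zero).mp e
    exact sub_eq_zero.mp this
  constructor
  · exact ((Set.toFinite _).injOn_iff_bijOn_of_mapsTo hmaps).mp hinj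
  · intro x y hx hy hxy
    have hbinv : f b⁻¹ = (f b)⁻¹ := by
      have h1 : f b * f b⁻¹ = 1 := by
        rw [← map_mul, ZMod.mul_inv_of_unit b hb, map_one]
      exact inv_eq_of_mul_eq_one_right h1 ▸ rfl
    have h2 : f b * f x = f y := by
      have := congrArg f hxy
      rwa [map_add, map_mul, map_mul, hfa, zero_mul, zero_add] at this
    show f x = f (y * b⁻¹)
    rw [map_mul, hbinv, eq_mul_inv_iff_mul_eq₀ hfb, mul_comm]
    exact h2
end
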